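/- For the Exp3 algorithm run over a finite set of K actions with rewards in [0,1], horizon T, and exploration parameter γ = min{1, sqrt(K ln K / ((e-1) T))}, the expected static regret against the best fixed action in hindsight is at most 2 sqrt(e-1) · sqrt(T K ln K). -/

import Mathlib

/-!
The classical potential argument for Exp3, with `W_t = ∑ₓ w_t(x)`. The importance-weighted
estimate is unbiased, so `E[log w_T(x)] = (γ/K) ∑_t f_t(x)`. On the other side `γΦ_t/K ≤ 1`
(every action has probability at least `γ/K`), so `e^z ≤ 1 + z + (e-2) z²` on `[0,1]` and
`(1-γ) w_t(x)/W_t ≤ y_t(x)` give, in expectation over one round,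
`(1-γ) log(W_{t+1}/W_t) ≤ (γ/K) f_t(x_t) + (e-2) γ²/K`. Comparing via `w_T(x) ≤ W_T` and
`W_1 = K` gives regret at most `(e-1) γ T + K ln K / γ`, which the chosen `γ` balances to
`2 √((e-1) T K ln K)`; when `γ` is clipped to `1`, the trivial bound `T` is already smaller.
-/

open Finset Real

/-- Exp3 weights, indexed by the *reversed* history of played actions
(most recent action first). `exp3w f γ h x` is the weight of action `x`
after the (reversed) history `h` has been played. -/
noncomputable def exp3w {X : Type*} [Fintype X] [DecidableEq X] (f : ℕ → X → ℝ) (γ : ℝ) :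
    List X → X → ℝ
  | [] => fun _ => 1
  | a :: h => fun x =>
      exp3w f γ h x *
        Real.exp (γ * (if x = a then
            f h.length a /
              (γ / (Fintype.card X : ℝ) +
                (1 - γ) * exp3w f γ h a / ∑ x' : X, exp3w f γ h x')
          else 0) / (Fintype.card X : ℝ))

/-- Exp3 sampling distribution after (reversed) history `h`. -/
noncomputable def exp3y {X : Type*} [Fintype X] [DecidableEq X] (f : ℕ → X → ℝ) (γ : ℝ)
    (h : List X) (x : X) : ℝ :=
  γ / (Fintype.card X : ℝ) + (1 - γ) * exp3w f γ h x / ∑ x' : X, exp3w f γ h x'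

/-- Expected cumulative reward of Exp3 for the next `n` rounds, starting from
(reversed) history `h`. -/
noncomputable def exp3EV {X : Type*} [Fintype X] [DecidableEq X] (f : ℕ → X → ℝ) (γ : ℝ) :
    ℕ → List X → ℝ
  | 0, _ => 0
  | n + 1, h => ∑ x : X, exp3y f γ h x * (f h.length x + exp3EV f γ n (x :: h))

open scoped Nat in
theorem exp_le_one_add_add_exp_one_sub_two_mul_sq {z : ℝ} (h0 : 0 ≤ z) (h1 : z ≤ 1) :
    exp z ≤ 1 + z + (exp 1 - 2) * z ^ 2 := by
  have tail (w : ℝ) : HasSum (fun n : ℕ ↦ w ^ (n + 2) / (n + 2)!) (exp w - 1 - w) := by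
    have := (hasSum_nat_add_iff' 2).mpr (exp_eq_exp_ℝ ▸ NormedSpace.expSeries_div_hasSum_exp w)
    simpa [sum_range_succ, sub_sub] using this
  have := hasSum_le (fun n ↦ ?_) (tail z) ((tail 1).mul_left (z ^ 2))
  · linarith
  · rw [one_pow, mul_one_div]
    gcongr ?_ / _
    exact pow_le_pow_of_le_one h0 h1 (by omega)

theorem le_two_sqrt_mul_of_le_min_sqrt_div {A B R : ℝ} (hA : 0 ≤ A) (hB : 0 < B)
    (hR₂ : R ≤ 2 * B) (hR : R ≤ min 1 √(A / B) * B + A / min 1 √(A / B)) :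
    R ≤ 2 * √(A * B) := by
  rcases le_total √(A / B) 1 with hs | hs
  · rw [min_eq_right hs] at hR
    have hsqrt_mul : √(A / B) * B = √(A * B) := by
      rw [show A * B = A / B * B ^ 2 by field_simp, sqrt_mul (div_nonneg hA hB.le), sqrt_sq hB.le]
    have hdiv_sqrt : A / √(A / B) = √(A * B) := by
      rcases hA.eq_or_lt with rfl | hA
      · simp
      rw [div_eq_iff (sqrt_pos.2 (div_pos hA hB)).ne', ← sqrt_mul (mul_nonneg hA.le hB.le),
        show A * B * (A / B) = A ^ 2 by field_simp, sqrt_sq hA.le]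
    linarith
  · have hBA : B ≤ A := (one_le_div hB).1 (one_le_sqrt.1 hs)
    calc R ≤ 2 * B := hR₂
      _ = 2 * √(B * B) := by rw [sqrt_mul_self hB.le]
      _ ≤ 2 * √(A * B) := by gcongr

/-- `exp3Expect f γ n h F` is the expectation of `F` at the (reversed) history reached after `n`
further rounds of Exp3 started from `h`. -/
noncomputable def exp3Expect {X : Type*} [Fintype X] [DecidableEq X] (f : ℕ → X → ℝ) (γ : ℝ) :
    ℕ → List X → (List X → ℝ) → ℝ
  | 0, h, F => F h
  | n + 1, h, F => ∑ x : X, exp3y f γ h x * exp3Expect f γ n (x :: h) F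

section Exp3

variable {X : Type*} [Fintype X] [DecidableEq X] (f : ℕ → X → ℝ) (γ : ℝ)

theorem exp3w_cons (a : X) (h : List X) (x : X) :
    exp3w f γ (a :: h) x = exp3w f γ h x *
      exp (γ * (if x = a then f h.length a / exp3y f γ h a else 0) / Fintype.card X) :=
  rfl

theorem exp3w_pos (h : List X) (x : X) : 0 < exp3w f γ h x := by
  induction h with
  | nil => exact one_pos
  | cons a h ih => rw [exp3w_cons]; positivity

theorem sum_exp3w_cons (h : List X) (a : X) :
    ∑ x, exp3w f γ (a :: h) x = ∑ x, exp3w f γ h x +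
      exp3w f γ h a * (exp (γ * (f h.length a / exp3y f γ h a) / Fintype.card X) - 1) := by
  have hterm (x : X) : exp3w f γ (a :: h) x = exp3w f γ h x +
      if x = a then exp3w f γ h a *
        (exp (γ * (f h.length a / exp3y f γ h a) / Fintype.card X) - 1) else 0 := by
    rw [exp3w_cons]
    split_ifs with hxa
    · subst hxa; ring
    · simp
  simp only [hterm, sum_add_distrib, sum_ite_eq', mem_univ, if_true]

variable [Nonempty X]

theorem sum_exp3w_pos (h : List X) : 0 < ∑ x, exp3w f γ h x :=
  sum_pos (fun x _ ↦ exp3w_pos f γ h x) univ_nonempty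

theorem sum_exp3y (h : List X) : ∑ x, exp3y f γ h x = 1 := by
  have hW := (sum_exp3w_pos f γ h).ne'
  simp only [exp3y, sum_add_distrib, sum_const, card_univ, nsmul_eq_mul, ← sum_div, ← mul_sum]
  field_simp
  ring

theorem exp3EV_of_subsingleton [Subsingleton X] (x : X) (n : ℕ) (h : List X) :
    exp3EV f γ n h = ∑ i ∈ range n, f (h.length + i) x := by
  induction n generalizing h with
  | zero => rfl
  | succ n ih =>
    have hy : exp3y f γ h x = 1 := by rw [← sum_exp3y f γ h, Fintype.sum_subsingleton _ x]
    rw [exp3EV, Fintype.sum_subsingleton _ x, hy, one_mul, ih, sum_range_succ', List.length_cons]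
    ring_nf

variable {γ}

theorem div_card_le_exp3y (hγ1 : γ ≤ 1) (h : List X) (x : X) :
    γ / Fintype.card X ≤ exp3y f γ h x := by
  have := div_nonneg (mul_nonneg (sub_nonneg.2 hγ1) (exp3w_pos f γ h x).le)
    (sum_exp3w_pos f γ h).le
  unfold exp3y
  linarith

theorem exp3y_nonneg (hγ0 : 0 ≤ γ) (hγ1 : γ ≤ 1) (h : List X) (x : X) : 0 ≤ exp3y f γ h x :=
  (div_nonneg hγ0 (Nat.cast_nonneg _)).trans (div_card_le_exp3y f hγ1 h x)

theorem exp3y_pos (hγ0 : 0 < γ) (hγ1 : γ ≤ 1) (h : List X) (x : X) : 0 < exp3y f γ h x :=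
  (div_pos hγ0 (Nat.cast_pos.2 Fintype.card_pos)).trans_le (div_card_le_exp3y f hγ1 h x)

theorem exp3EV_nonneg (hγ0 : 0 ≤ γ) (hγ1 : γ ≤ 1) (hf : ∀ t x, f t x ∈ Set.Icc (0 : ℝ) 1)
    (n : ℕ) (h : List X) :
    0 ≤ exp3EV f γ n h := by
  induction n generalizing h with
  | zero => exact le_rfl
  | succ n ih =>
    exact sum_nonneg fun x _ ↦ mul_nonneg (exp3y_nonneg f hγ0 hγ1 h x)
      (add_nonneg (hf _ x).1 (ih _))

theorem exp3_regret_le_horizon (hγ0 : 0 ≤ γ) (hγ1 : γ ≤ 1)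
    (hf : ∀ t x, f t x ∈ Set.Icc (0 : ℝ) 1) (T : ℕ) (x : X) :
    ∑ t ∈ range T, f t x - exp3EV f γ T [] ≤ T := by
  have hS : ∑ t ∈ range T, f t x ≤ T := by
    simpa using sum_le_card_nsmul (range T) (f · x) 1 fun t _ ↦ (hf t x).2
  linarith [exp3EV_nonneg f hγ0 hγ1 hf T []]

theorem exp3Expect_mono (hγ0 : 0 ≤ γ) (hγ1 : γ ≤ 1) {F G : List X → ℝ} (hFG : ∀ h, F h ≤ G h)
    (n : ℕ) (h : List X) :
    exp3Expect f γ n h F ≤ exp3Expect f γ n h G := by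
  induction n generalizing h with
  | zero => exact hFG h
  | succ n ih =>
    exact sum_le_sum fun x _ ↦ mul_le_mul_of_nonneg_left (ih _) (exp3y_nonneg f hγ0 hγ1 h x)

variable (hγ0 : 0 < γ) (hγ1 : γ ≤ 1)
include hγ0 hγ1

theorem sum_exp3y_mul_ite_div (h : List X) (x : X) (g : X → ℝ) :
    ∑ a, exp3y f γ h a * (if x = a then g a / exp3y f γ h a else 0) = g x := by
  simp [mul_div_cancel₀ _ (exp3y_pos f hγ0 hγ1 h x).ne']

theorem exp3Expect_log_exp3w (x : X) (n : ℕ) (h : List X) :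
    exp3Expect f γ n h (fun h' ↦ log (exp3w f γ h' x)) =
      log (exp3w f γ h x) + γ / Fintype.card X * ∑ i ∈ range n, f (h.length + i) x := by
  induction n generalizing h with
  | zero => simp [exp3Expect]
  | succ n ih =>
    have hlog (a : X) : log (exp3w f γ (a :: h) x) = log (exp3w f γ h x) +
        γ / Fintype.card X * (if x = a then f h.length a / exp3y f γ h a else 0) := by
      rw [exp3w_cons, log_mul (exp3w_pos f γ h x).ne' (exp_ne_zero _), log_exp]
      ring
    simp only [exp3Expect, ih, hlog, List.length_cons, sum_range_succ', mul_add, sum_add_distrib,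
      ← sum_mul, sum_exp3y, one_mul, mul_left_comm _ (γ / _), ← mul_sum,
      sum_exp3y_mul_ite_div f hγ0 hγ1]
    ring_nf

theorem log_sum_exp3w_cons_le (hf : ∀ t x, f t x ∈ Set.Icc (0 : ℝ) 1) (h : List X) (a : X) :
    (1 - γ) * log (∑ x, exp3w f γ (a :: h) x) ≤ (1 - γ) * log (∑ x, exp3w f γ h x) +
      γ * f h.length a / Fintype.card X +
      (exp 1 - 2) * γ ^ 2 / ((Fintype.card X : ℝ) ^ 2 * exp3y f γ h a) := by
  set K : ℝ := (Fintype.card X : ℝ)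
  set W := ∑ x, exp3w f γ h x
  set y := exp3y f γ h a
  set F := f h.length a
  set c := γ * (F / y) / K with hc
  have hK : 0 < K := Nat.cast_pos.2 Fintype.card_pos
  have hW : 0 < W := sum_exp3w_pos f γ h
  have hy : 0 < y := exp3y_pos f hγ0 hγ1 h a
  have hwa : 0 < exp3w f γ h a := exp3w_pos f γ h a
  obtain ⟨hF0, hF1⟩ := hf h.length a
  have hc0 : 0 ≤ c := by positivity
  have hc1 : c ≤ 1 := by
    have : γ ≤ y * K := (div_le_iff₀ hK).1 (div_card_le_exp3y f hγ1 h a)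
    rw [hc, div_le_one hK, mul_div_assoc', div_le_iff₀ hy]
    nlinarith
  have hlog : log (∑ x, exp3w f γ (a :: h) x) - log W ≤
      exp3w f γ h a / W * (c + (exp 1 - 2) * c ^ 2) := by
    have hW' := sum_exp3w_pos f γ (a :: h)
    rw [← log_div hW'.ne' hW.ne']
    refine (log_le_sub_one_of_pos (div_pos hW' hW)).trans ?_
    rw [sum_exp3w_cons, add_div, div_self hW.ne', add_sub_cancel_left, mul_div_right_comm]
    gcongr
    linarith [exp_le_one_add_add_exp_one_sub_two_mul_sq hc0 hc1]
  have hmix : (1 - γ) * (exp3w f γ h a / W) ≤ y := by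
    have : 0 ≤ γ / K := by positivity
    simp only [y, exp3y]
    rw [mul_div_assoc']
    linarith
  have he : 0 ≤ exp 1 - 2 := by linarith [exp_one_gt_d9]
  have hquad : y * ((exp 1 - 2) * c ^ 2) ≤ (exp 1 - 2) * γ ^ 2 / (K ^ 2 * y) := by
    rw [hc]
    field_simp
    exact mul_le_of_le_one_right he (pow_le_one₀ hF0 hF1)
  calc (1 - γ) * log (∑ x, exp3w f γ (a :: h) x)
      ≤ (1 - γ) * log W + (1 - γ) * (exp3w f γ h a / W) * (c + (exp 1 - 2) * c ^ 2) := by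
        nlinarith
    _ ≤ (1 - γ) * log W + y * (c + (exp 1 - 2) * c ^ 2) := by
        gcongr
    _ ≤ _ := by
        have : y * c = γ * F / K := by rw [hc]; field_simp
        rw [mul_add, this]
        linarith

theorem mul_exp3Expect_log_sum_exp3w_le (hf : ∀ t x, f t x ∈ Set.Icc (0 : ℝ) 1) (n : ℕ)
    (h : List X) :
    (1 - γ) * exp3Expect f γ n h (fun h' ↦ log (∑ x, exp3w f γ h' x)) ≤
      (1 - γ) * log (∑ x, exp3w f γ h x) + γ / Fintype.card X * exp3EV f γ n h +
        n * ((exp 1 - 2) * γ ^ 2 / Fintype.card X) := by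
  induction n generalizing h with
  | zero => simp [exp3Expect, exp3EV]
  | succ n ih =>
    set K : ℝ := (Fintype.card X : ℝ)
    have hK : K ≠ 0 := Nat.cast_ne_zero.2 Fintype.card_ne_zero
    set D := (exp 1 - 2) * γ ^ 2 / K
    have hround (a : X) : (1 - γ) * exp3Expect f γ n (a :: h) (fun h' ↦ log (∑ x, exp3w f γ h' x)) ≤
        (1 - γ) * log (∑ x, exp3w f γ h x) + n * D +
          γ / K * (f h.length a + exp3EV f γ n (a :: h)) + D / (K * exp3y f γ h a) := by
      have hstep := log_sum_exp3w_cons_le f hγ0 hγ1 hf h a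
      have hD : (exp 1 - 2) * γ ^ 2 / (K ^ 2 * exp3y f γ h a) = D / (K * exp3y f γ h a) := by
        simp only [D]; field_simp
      rw [hD, mul_div_right_comm] at hstep
      linarith [ih (a :: h)]
    calc (1 - γ) * exp3Expect f γ (n + 1) h (fun h' ↦ log (∑ x, exp3w f γ h' x))
        = ∑ a, exp3y f γ h a *
            ((1 - γ) * exp3Expect f γ n (a :: h) (fun h' ↦ log (∑ x, exp3w f γ h' x))) := by
          simp only [exp3Expect, mul_sum]; ring_nf
      _ ≤ ∑ a, exp3y f γ h a * ((1 - γ) * log (∑ x, exp3w f γ h x) + n * D +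
            γ / K * (f h.length a + exp3EV f γ n (a :: h)) + D / (K * exp3y f γ h a)) := by
          gcongr with a
          · exact exp3y_nonneg f hγ0.le hγ1 h a
          · exact hround a
      _ = _ := by
          have hy (a : X) : exp3y f γ h a * (D / (K * exp3y f γ h a)) = D / K := by
            field_simp [(exp3y_pos f hγ0 hγ1 h a).ne']
          simp only [mul_add, sum_add_distrib, ← sum_mul, sum_exp3y, hy, sum_const, card_univ,
            nsmul_eq_mul, mul_left_comm _ (γ / K), ← mul_sum, exp3EV]
          field_simp
          push_cast
          ring

theorem exp3_regret_le (hf : ∀ t x, f t x ∈ Set.Icc (0 : ℝ) 1) (T : ℕ) (x : X) :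
    ∑ t ∈ range T, f t x - exp3EV f γ T [] ≤
      (exp 1 - 1) * γ * T + Fintype.card X * log (Fintype.card X) / γ := by
  have hfixed := exp3Expect_log_exp3w f hγ0 hγ1 x T []
  have hmono : exp3Expect f γ T [] (fun h' ↦ log (exp3w f γ h' x)) ≤
      exp3Expect f γ T [] (fun h' ↦ log (∑ x', exp3w f γ h' x')) :=
    exp3Expect_mono f hγ0.le hγ1 (fun h' ↦ log_le_log (exp3w_pos f γ h' x)
      (single_le_sum (fun x' _ ↦ (exp3w_pos f γ h' x').le) (mem_univ x))) T []
  have htotal := mul_exp3Expect_log_sum_exp3w_le f hγ0 hγ1 hf T []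
  simp only [exp3w, log_one, zero_add, List.length_nil, sum_const, card_univ, nsmul_eq_mul,
    mul_one] at hfixed htotal
  rw [hfixed] at hmono
  set K : ℝ := (Fintype.card X : ℝ)
  set S := ∑ t ∈ range T, f t x
  set EV := exp3EV f γ T []
  have hK : 0 < K := Nat.cast_pos.2 Fintype.card_pos
  have hKL : 0 ≤ K * log K := mul_nonneg hK.le (log_nonneg (Nat.one_le_cast.2 Fintype.card_pos))
  have hS : S ≤ T := by
    simpa using sum_le_card_nsmul (range T) (f · x) 1 fun t _ ↦ (hf t x).2
  have hscaled : (1 - γ) * S ≤ (1 - γ) * (K * log K / γ) + EV + (exp 1 - 2) * γ * T :=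
    calc (1 - γ) * S = K / γ * ((1 - γ) * (γ / K * S)) := by field_simp
      _ ≤ K / γ * ((1 - γ) * log K + γ / K * EV + T * ((exp 1 - 2) * γ ^ 2 / K)) := by
        gcongr
        exact (mul_le_mul_of_nonneg_left hmono (sub_nonneg.2 hγ1)).trans htotal
      _ = (1 - γ) * (K * log K / γ) + EV + (exp 1 - 2) * γ * T := by field_simp
  have : γ * S ≤ γ * T := mul_le_mul_of_nonneg_left hS hγ0.le
  have : 0 ≤ γ * (K * log K / γ) := by positivity
  linarith

end Exp3

theorem exp3_regret_bound_general {X : Type*} [Fintype X] [DecidableEq X]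
    (f : ℕ → X → ℝ) (T : ℕ)
    (hf : ∀ t x, f t x ∈ Set.Icc (0 : ℝ) 1)
    (γ : ℝ)
    (hγ : γ = min 1 (Real.sqrt ((Fintype.card X : ℝ) * Real.log (Fintype.card X) /
      ((Real.exp 1 - 1) * T)))) :
    ∀ x : X,
      (∑ t ∈ Finset.range T, f t x) - exp3EV f γ T [] ≤
        2 * Real.sqrt (Real.exp 1 - 1) *
          Real.sqrt ((T : ℝ) * (Fintype.card X : ℝ) * Real.log (Fintype.card X)) := by
  intro x
  have : Nonempty X := ⟨x⟩
  rcases T.eq_zero_or_pos with rfl | hT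
  · simp [exp3EV]
  rcases le_or_gt (Fintype.card X) 1 with hK | hK
  · have : Subsingleton X := Fintype.card_le_one_iff_subsingleton.1 hK
    rw [exp3EV_of_subsingleton f γ x, List.length_nil]
    simp only [zero_add, sub_self]
    positivity
  have he : 1 / 2 ≤ exp 1 - 1 := by linarith [add_one_le_exp 1]
  have hA : 0 < (Fintype.card X : ℝ) * log (Fintype.card X) :=
    mul_pos (by positivity) (log_pos (Nat.one_lt_cast.2 hK))
  have hB : 0 < (exp 1 - 1) * T := by positivity
  have hγ0 : 0 < γ := hγ ▸ lt_min one_pos (sqrt_pos.2 (div_pos hA hB))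
  have hγ1 : γ ≤ 1 := hγ ▸ min_le_left _ _
  have hR₂ : ∑ t ∈ range T, f t x - exp3EV f γ T [] ≤ 2 * ((exp 1 - 1) * T) :=
    (exp3_regret_le_horizon f hγ0.le hγ1 hf T x).trans (by nlinarith)
  have hbound := le_two_sqrt_mul_of_le_min_sqrt_div hA.le hB hR₂
    ((exp3_regret_le f hγ0 hγ1 hf T x).trans_eq (by rw [hγ]; ring))
  convert hbound using 1
  rw [mul_assoc, ← sqrt_mul (by linarith)]
  ring_nf

/-- The Exp3 algorithm with `γ = min {1, √(K ln K / ((e-1) T))}` has expected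
static regret at most `2 √(e-1) · √(T K ln K)` against any fixed action. -/
theorem exp3_regret_bound {X : Type*} [Fintype X] [DecidableEq X] [Nonempty X]
    (f : ℕ → X → ℝ) (T : ℕ) (hT : 0 < T)
    (hf : ∀ t x, f t x ∈ Set.Icc (0 : ℝ) 1)
    (γ : ℝ)
    (hγ : γ = min 1 (Real.sqrt ((Fintype.card X : ℝ) * Real.log (Fintype.card X) /
      ((Real.exp 1 - 1) * T)))) :
    ∀ x : X,
      (∑ t ∈ Finset.range T, f t x) - exp3EV f γ T [] ≤
        2 * Real.sqrt (Real.exp 1 - 1) *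
          Real.sqrt ((T : ℝ) * (Fintype.card X : ℝ) * Real.log (Fintype.card X)) :=
  exp3_regret_bound_general f T hf γ hγ
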